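/- Let (x, y), (a, b) ∈ ℝ × ℝ with x² = 1. Set d₁ = a·x − 1, d₂ = a·y − b·x, and assume d₁ ≠ 0. Define x' = (x − a)/d₁ and y' = ((y − b)·d₁ − (x − a)·d₂)/d₁². Then x'² = 1, and the three points (x, y), (a, b), (x', y') of ℝ² are collinear (Collinear ℝ ({(x,y), (a,b), (x',y')} : Set (ℝ × ℝ))). -/

import Mathlib

/-!
On the lines `x² = 1` we have `a x - 1 = x (a - x)`, so the reversion sends `x` to `-x`: it swaps
the two lines. Moreover the image point is the point of the line through `(x, y)` and `(a, b)` with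
affine parameter `-2 / (a x - 1)`, which gives collinearity.
-/

theorem collinear_insert_insert_lineMap {k V P : Type*} [DivisionRing k] [AddCommGroup V]
    [Module k V] [AddTorsor V P] (p q : P) (t : k) :
    Collinear k ({p, q, AffineMap.lineMap p q t} : Set P) :=
  collinear_triple_of_mem_affineSpan_pair (left_mem_affineSpan_pair k p q)
    (right_mem_affineSpan_pair k p q) (AffineMap.lineMap_mem_affineSpan_pair t p q)

section Reversion

variable {x y a b : ℝ}

theorem reversion_fst_eq_neg (hx : x ^ 2 = 1) (hd : a * x - 1 ≠ 0) :
    (x - a) / (a * x - 1) = -x := by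
  rw [div_eq_iff hd]
  linear_combination a * hx

theorem reversion_eq_lineMap (hx : x ^ 2 = 1) (hd : a * x - 1 ≠ 0) :
    ((x - a) / (a * x - 1),
      ((y - b) * (a * x - 1) - (x - a) * (a * y - b * x)) / (a * x - 1) ^ 2) =
      AffineMap.lineMap (x, y) (a, b) (-2 / (a * x - 1)) := by
  rw [AffineMap.lineMap_apply_module']
  simp only [Prod.smul_mk, Prod.mk_sub_mk, Prod.mk_add_mk, smul_eq_mul, Prod.mk.injEq]
  -- `field_simp` only cancels the denominator once it is an atom
  set d := a * x - 1
  constructor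
  · field_simp
    linear_combination (-a) * hx
  · field_simp
    linear_combination (b - a ^ 2 * y) * hx

end Reversion

/-- Reversion of the degenerate quadric `x² = 1` (a pair of parallel lines, the
"unit sphere" of the dual numbers) through the point `(a, b)`, in coordinates:
it preserves the pair of lines `x² = 1` and the image point is collinear with
`(x, y)` and `(a, b)`. -/
theorem parallel_lines_reversion (x y a b : ℝ)
    (hx2 : x ^ 2 = 1)
    (d₁ d₂ : ℝ)
    (hd₁ : d₁ = a * x - 1)
    (hd₂ : d₂ = a * y - b * x)
    (hd₁0 : d₁ ≠ 0)
    (x' y' : ℝ)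
    (hx' : x' = (x - a) / d₁)
    (hy' : y' = ((y - b) * d₁ - (x - a) * d₂) / d₁ ^ 2) :
    x' ^ 2 = 1 ∧
    Collinear ℝ ({(x, y), (a, b), (x', y')} : Set (ℝ × ℝ)) := by
  subst hd₁ hd₂ hx' hy'
  refine ⟨by rw [reversion_fst_eq_neg hx2 hd₁0, neg_sq, hx2], ?_⟩
  rw [reversion_eq_lineMap hx2 hd₁0]
  exact collinear_insert_insert_lineMap _ _ _
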